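/- Assume the drift condition: there exist a measurable V : X → [1,∞), a measurable set C ⊆ X, constants b, c > 0 and 0 < α ≤ 1 such that P_θV ≤ V − c V^{1−α} + b·1_C for every θ ∈ Θ. Let {r_n : n ≥ 0} be a non-increasing positive sequence. Then there exists a constant b̄ < ∞ (depending only on b, c, α) such that for every l ≥ 0, (x,θ) ∈ X × Θ, 0 ≤ β ≤ 1 and n ≥ 0, β c · E^{(l)}_{x,θ}[ Σ_{k ≥ n} r_{k+1} V^{β−α}(X_k) ] ≤ r_n E^{(l)}_{x,θ}[V^β(X_n)] + b̄ · E^{(l)}_{x,θ}[ Σ_{k ≥ n} r_{k+1} 1_C(X_k) ]. -/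

import Mathlib

open MeasureTheory ProbabilityTheory Filter Set
open scoped ENNReal NNReal Classical

noncomputable section

namespace AdaptiveMCMC

variable {X Θ : Type*} [MeasurableSpace X] [MeasurableSpace Θ]

/-- The `W`-weighted norm distance between two measures:
`‖μ − ν‖_W = sup { |μ(g) − ν(g)| : g measurable, |g| ≤ W }`. -/
def wDist (W : X → ℝ) (μ ν : Measure X) : ℝ :=
  ⨆ g : {g : X → ℝ // Measurable g ∧ ∀ x, |g x| ≤ W x},
    |(∫ x, g.1 x ∂μ) - ∫ x, g.1 x ∂ν|

/-- Total variation distance `‖μ − ν‖_TV = sup { |μ(f) − ν(f)| : |f| ≤ 1 }`. -/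
def tvDist (μ ν : Measure X) : ℝ := wDist (fun _ => 1) μ ν

/-- `D(θ,θ') = sup_x ‖P_θ(x,·) − P_θ'(x,·)‖_TV`. -/
def Dtv (P : Θ → Kernel X X) (θ θ' : Θ) : ℝ := ⨆ x : X, tvDist (P θ x) (P θ' x)

/-- Iterates `P^n` of a kernel. -/
def kpow (P : Kernel X X) : ℕ → Kernel X X
  | 0 => Kernel.id
  | n + 1 => (kpow P n) ∘ₖ P

/-- Prepend a state to a path. -/
def prepend {α : Type*} (z : α) (ω : ℕ → α) : ℕ → α
  | 0 => z
  | n + 1 => ω n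

/-- `law l (x,θ)` is the law `P^{(l)}_{x,θ}` of the canonical nonhomogeneous Markov chain
`{Z_n = (X_n, θ_n)}` started at `(x,θ)` whose `n`-th transition kernel is `P̄(l+n)`. -/
structure IsAdaptiveLaw (Pbar : ℕ → Kernel (X × Θ) (X × Θ))
    (law : ℕ → X × Θ → Measure (ℕ → X × Θ)) : Prop where
  prob : ∀ l z, IsProbabilityMeasure (law l z)
  meas : ∀ l, Measurable (law l)
  step : ∀ l z, law l z = (Pbar l z).bind fun z' => (law (l + 1) z').map (prepend z)

/-- The marginal compatibility `∫_{A×Θ} P̄(n;(x,θ);(dx',dθ')) = P_θ(x,A)`. -/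
def Compat (P : Θ → Kernel X X) (Pbar : ℕ → Kernel (X × Θ) (X × Θ)) : Prop :=
  ∀ (n : ℕ) (x : X) (θ : Θ) (A : Set X), MeasurableSet A →
    Pbar n (x, θ) (A ×ˢ (Set.univ : Set Θ)) = P θ x A

/-- Law of the chain with initial distribution `ξ1 ⊗ ξ2` (and `l = 0`). -/
def chainLaw (law : ℕ → X × Θ → Measure (ℕ → X × Θ)) (ξ1 : Measure X) (ξ2 : Measure Θ) :
    Measure (ℕ → X × Θ) :=
  (ξ1.prod ξ2).bind (law 0)

/-- Return time `τ_C = inf {n ≥ 1 : X_n ∈ C}` (equal to `⊤` if no such `n`). -/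
def hitTime (C : Set X) (ω : ℕ → X × Θ) : ℕ∞ :=
  ⨅ m : {m : ℕ // 1 ≤ m ∧ (ω m).1 ∈ C}, (m.1 : ℕ∞)

/-- Evaluation of `r : ℕ → ℝ` at an extended natural, with value `∞` at `∞`. -/
def rEval (r : ℕ → ℝ) : ℕ∞ → ℝ≥0∞ := fun t =>
  if t = ⊤ then ⊤ else ENNReal.ofReal (r t.toNat)

end AdaptiveMCMC

namespace AdaptiveMCMC

/-! Concavity of `t ↦ t ^ β` gives the tangent bound `w ^ β ≤ v ^ β + β v ^ (β - 1) (w - v)`.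
Integrating it at `v = V x` against `P_θ(x, ·)` and inserting the drift condition (with
`β v ^ (β - 1) ≤ 1`) yields the drift `P_θ V^β ≤ V^β - β c V^(β-α) + b 1_C` of `V^β`. Along the
chain this reads `E[V^β(X_{k+1})] + β c E[V^(β-α)(X_k)] ≤ E[V^β(X_k)] + b P(X_k ∈ C)`;
multiplying by `r_{k+1} ≤ r_k` and summing over `k ≥ n` telescopes to the bound with `b̄ = b`.
Working in `ℝ≥0∞` throughout, no integrability or finiteness of the moments is needed. -/

theorem rpow_le_tangent {w t β : ℝ} (hw : 0 ≤ w) (ht : 0 < t) (hβ0 : 0 ≤ β) (hβ1 : β ≤ 1) :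
    w ^ β ≤ (1 - β) * t ^ β + β * t ^ (β - 1) * w := by
  have amgm := Real.geom_mean_le_arith_mean2_weighted hβ0 (sub_nonneg.2 hβ1) hw ht.le
    (add_sub_cancel β 1)
  have hprod : t ^ (1 - β) * t ^ (β - 1) = 1 := by
    rw [← Real.rpow_add ht, sub_add_sub_cancel', sub_self, Real.rpow_zero]
  have hpow : t * t ^ (β - 1) = t ^ β := by
    rw [mul_comm, ← Real.rpow_add_one ht.ne', sub_add_cancel]
  calc w ^ β = w ^ β * t ^ (1 - β) * t ^ (β - 1) := by rw [mul_assoc, hprod, mul_one]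
    _ ≤ (β * w + (1 - β) * t) * t ^ (β - 1) := by gcongr
    _ = (1 - β) * t ^ β + β * t ^ (β - 1) * w := by rw [← hpow]; ring

theorem rpow_tangent_drift_le {v c e α β : ℝ} (hv : 1 ≤ v) (he : 0 ≤ e) (hβ1 : β ≤ 1) :
    (1 - β) * v ^ β + β * v ^ (β - 1) * (v - c * v ^ (1 - α) + e) + β * c * v ^ (β - α)
      ≤ v ^ β + e := by
  have hv0 : 0 < v := one_pos.trans_le hv
  have hpow : v ^ (β - 1) * v = v ^ β := by rw [← Real.rpow_add_one hv0.ne', sub_add_cancel]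
  have hpow' : v ^ (β - 1) * v ^ (1 - α) = v ^ (β - α) := by
    rw [← Real.rpow_add hv0, sub_add_sub_cancel]
  have hsmall : β * v ^ (β - 1) ≤ 1 :=
    mul_le_one₀ hβ1 (by positivity) (Real.rpow_le_one_of_one_le_of_nonpos hv (by linarith))
  calc (1 - β) * v ^ β + β * v ^ (β - 1) * (v - c * v ^ (1 - α) + e) + β * c * v ^ (β - α)
      = v ^ β + β * v ^ (β - 1) * e := by rw [← hpow, ← hpow']; ring
    _ ≤ v ^ β + e := by nlinarith

theorem lintegral_rpow_add_le_of_lintegral_le {X : Type*} [MeasurableSpace X] {μ : Measure X}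
    [IsProbabilityMeasure μ] {V : X → ℝ} (hV : Measurable V) (hV1 : ∀ y, 1 ≤ V y)
    {v c e α β : ℝ} (hv : 1 ≤ v) (hc : 0 ≤ c) (he : 0 ≤ e) (hβ0 : 0 ≤ β) (hβ1 : β ≤ 1)
    (hdrift : ∫⁻ y, ENNReal.ofReal (V y) ∂μ ≤ ENNReal.ofReal (v - c * v ^ (1 - α) + e)) :
    ∫⁻ y, ENNReal.ofReal (V y ^ β) ∂μ + ENNReal.ofReal (β * c) * ENNReal.ofReal (v ^ (β - α))
      ≤ ENNReal.ofReal (v ^ β) + ENNReal.ofReal e := by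
  set u := v - c * v ^ (1 - α) + e
  have hv0 : 0 < v := one_pos.trans_le hv
  have hu1 : 1 ≤ u := by
    refine ENNReal.one_le_ofReal.1 (le_trans ?_ hdrift)
    calc (1 : ℝ≥0∞) = ∫⁻ _, 1 ∂μ := by simp
      _ ≤ ∫⁻ y, ENNReal.ofReal (V y) ∂μ :=
        lintegral_mono fun y => ENNReal.one_le_ofReal.2 (hV1 y)
  have h1 : 0 ≤ (1 - β) * v ^ β := by have := sub_nonneg.2 hβ1; positivity
  have h2 : 0 ≤ β * v ^ (β - 1) := by positivity
  have h3 : 0 ≤ β * c * v ^ (β - α) := by positivity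
  calc ∫⁻ y, ENNReal.ofReal (V y ^ β) ∂μ + ENNReal.ofReal (β * c) * ENNReal.ofReal (v ^ (β - α))
      ≤ ∫⁻ y, (ENNReal.ofReal ((1 - β) * v ^ β)
            + ENNReal.ofReal (β * v ^ (β - 1)) * ENNReal.ofReal (V y)) ∂μ
          + ENNReal.ofReal (β * c * v ^ (β - α)) := by
        rw [← ENNReal.ofReal_mul' (by positivity)]
        gcongr with y
        rw [← ENNReal.ofReal_mul h2, ← ENNReal.ofReal_add h1 (by nlinarith [hV1 y])]
        exact ENNReal.ofReal_le_ofReal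
          (rpow_le_tangent (zero_le_one.trans (hV1 y)) hv0 hβ0 hβ1)
    _ ≤ ENNReal.ofReal ((1 - β) * v ^ β) + ENNReal.ofReal (β * v ^ (β - 1)) * ENNReal.ofReal u
          + ENNReal.ofReal (β * c * v ^ (β - α)) := by
        rw [lintegral_add_left measurable_const, lintegral_const_mul _ hV.ennreal_ofReal]
        simp only [lintegral_const, measure_univ, mul_one]
        gcongr
    _ = ENNReal.ofReal ((1 - β) * v ^ β + β * v ^ (β - 1) * u + β * c * v ^ (β - α)) := by
        rw [← ENNReal.ofReal_mul h2, ← ENNReal.ofReal_add h1 (by nlinarith),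
          ← ENNReal.ofReal_add (by nlinarith) h3]
    _ ≤ ENNReal.ofReal (v ^ β) + ENNReal.ofReal e := by
        rw [← ENNReal.ofReal_add (by positivity) he]
        exact ENNReal.ofReal_le_ofReal (rpow_tangent_drift_le hv he hβ1)

section Telescoping

variable {a g h ρ : ℕ → ℝ≥0∞}

theorem weighted_sum_Ico_add_le_of_drift (hρ : Antitone ρ)
    (hdrift : ∀ k, a (k + 1) + g k ≤ a k + h k) {n N : ℕ} (hnN : n ≤ N) :
    ∑ k ∈ Finset.Ico n N, ρ (k + 1) * g k + ρ N * a N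
      ≤ ρ n * a n + ∑ k ∈ Finset.Ico n N, ρ (k + 1) * h k := by
  induction N, hnN using Nat.le_induction with
  | base => simp
  | succ N hnN ih =>
    have hstep : ρ (N + 1) * g N + ρ (N + 1) * a (N + 1) ≤ ρ N * a N + ρ (N + 1) * h N :=
      calc ρ (N + 1) * g N + ρ (N + 1) * a (N + 1) = ρ (N + 1) * (a (N + 1) + g N) := by ring
        _ ≤ ρ (N + 1) * (a N + h N) := by gcongr ρ (N + 1) * ?_; exact hdrift N
        _ ≤ ρ N * a N + ρ (N + 1) * h N := by
          rw [mul_add]; gcongr; exact hρ N.le_succ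
    rw [Finset.sum_Ico_succ_top hnN, Finset.sum_Ico_succ_top hnN]
    calc ∑ k ∈ Finset.Ico n N, ρ (k + 1) * g k + ρ (N + 1) * g N + ρ (N + 1) * a (N + 1)
        ≤ ∑ k ∈ Finset.Ico n N, ρ (k + 1) * g k + ρ N * a N + ρ (N + 1) * h N := by
          rw [add_assoc, add_assoc]; gcongr
      _ ≤ ρ n * a n + ∑ k ∈ Finset.Ico n N, ρ (k + 1) * h k + ρ (N + 1) * h N := by gcongr
      _ = _ := by rw [add_assoc]

theorem weighted_tsum_le_of_drift (hρ : Antitone ρ)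
    (hdrift : ∀ k, a (k + 1) + g k ≤ a k + h k) (n : ℕ) :
    ∑' k, (if n ≤ k then ρ (k + 1) * g k else 0)
      ≤ ρ n * a n + ∑' k, (if n ≤ k then ρ (k + 1) * h k else 0) := by
  refine ENNReal.tsum_le_of_sum_range_le fun N => ?_
  calc ∑ k ∈ Finset.range N, (if n ≤ k then ρ (k + 1) * g k else 0)
      ≤ ∑ k ∈ Finset.Ico n (max n N), ρ (k + 1) * g k := by
        rw [← Finset.sum_filter]
        refine Finset.sum_le_sum_of_subset fun k hk => ?_
        simp only [Finset.mem_filter, Finset.mem_range, Finset.mem_Ico] at hk ⊢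
        exact ⟨hk.2, hk.1.trans_le (le_max_right n N)⟩
    _ ≤ ρ n * a n + ∑ k ∈ Finset.Ico n (max n N), ρ (k + 1) * h k :=
        le_of_add_le_left (weighted_sum_Ico_add_le_of_drift hρ hdrift (le_max_left n N))
    _ ≤ ρ n * a n + ∑' k, (if n ≤ k then ρ (k + 1) * h k else 0) := by
        gcongr
        rw [Finset.sum_congr rfl fun k hk => (if_pos (Finset.mem_Ico.1 hk).1).symm]
        exact ENNReal.sum_le_tsum _

end Telescoping

theorem measurable_prepend {α : Type*} [MeasurableSpace α] (z : α) :
    Measurable (prepend z) :=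
  measurable_pi_iff.2 fun
    | 0 => measurable_const
    | k + 1 => measurable_pi_apply k

theorem lintegral_tsum_ite_mul {Ω : Type*} [MeasurableSpace Ω] {μ : Measure Ω}
    {F : ℕ → Ω → ℝ≥0∞} (hF : ∀ k, Measurable (F k)) {p : ℕ → Prop} [DecidablePred p]
    (w : ℕ → ℝ≥0∞) :
    ∫⁻ ω, ∑' k, (if p k then w k * F k ω else 0) ∂μ
      = ∑' k, if p k then w k * ∫⁻ ω, F k ω ∂μ else 0 := by
  have hmeas k : AEMeasurable (fun ω => if p k then w k * F k ω else 0) μ := by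
    split_ifs
    exacts [((hF k).const_mul (w k)).aemeasurable, aemeasurable_const]
  rw [lintegral_tsum hmeas]
  refine tsum_congr fun k => ?_
  split_ifs
  exacts [lintegral_const_mul _ (hF k), lintegral_zero]

section Chain

variable {X Θ : Type*} [MeasurableSpace X] [MeasurableSpace Θ]
  {Pbar : ℕ → Kernel (X × Θ) (X × Θ)} {law : ℕ → X × Θ → Measure (ℕ → X × Θ)}
  {f g h : X × Θ → ℝ≥0∞}

theorem IsAdaptiveLaw.lintegral_comp_eval (hlaw : IsAdaptiveLaw Pbar law) (hf : Measurable f)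
    (k l : ℕ) (z : X × Θ) :
    ∫⁻ ω, f (ω k) ∂law l z
      = ∫⁻ z', ∫⁻ ω, f (prepend z ω k) ∂law (l + 1) z' ∂Pbar l z := by
  have hfk : Measurable fun ω : ℕ → X × Θ => f (ω k) := hf.comp (measurable_pi_apply k)
  have hmap : Measurable fun z' => (law (l + 1) z').map (prepend z) :=
    (Measure.measurable_map _ (measurable_prepend z)).comp (hlaw.meas (l + 1))
  rw [hlaw.step l z, Measure.lintegral_bind hmap.aemeasurable hfk.aemeasurable]
  exact lintegral_congr fun z' => lintegral_map hfk (measurable_prepend z)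

theorem IsAdaptiveLaw.lintegral_comp_eval_succ (hlaw : IsAdaptiveLaw Pbar law)
    (hf : Measurable f) (k l : ℕ) (z : X × Θ) :
    ∫⁻ ω, f (ω (k + 1)) ∂law l z = ∫⁻ z', ∫⁻ ω, f (ω k) ∂law (l + 1) z' ∂Pbar l z :=
  hlaw.lintegral_comp_eval hf (k + 1) l z

theorem IsAdaptiveLaw.lintegral_comp_eval_zero (hlaw : IsAdaptiveLaw Pbar law)
    (hPbar : ∀ n, IsMarkovKernel (Pbar n)) (hf : Measurable f) (l : ℕ) (z : X × Θ) :
    ∫⁻ ω, f (ω 0) ∂law l z = f z := by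
  have := hlaw.prob
  simp [hlaw.lintegral_comp_eval hf 0 l z, prepend]

theorem IsAdaptiveLaw.measurable_lintegral_comp_eval (hlaw : IsAdaptiveLaw Pbar law)
    (hf : Measurable f) (k l : ℕ) :
    Measurable fun z => ∫⁻ ω, f (ω k) ∂law l z :=
  (Measure.measurable_lintegral (hf.comp (measurable_pi_apply k))).comp (hlaw.meas l)

theorem IsAdaptiveLaw.lintegral_drift_le (hlaw : IsAdaptiveLaw Pbar law)
    (hPbar : ∀ n, IsMarkovKernel (Pbar n)) (hf : Measurable f) (hg : Measurable g)
    (hh : Measurable h) (hstep : ∀ l z, ∫⁻ z', f z' ∂Pbar l z + g z ≤ f z + h z) (k l : ℕ)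
    (z : X × Θ) :
    ∫⁻ ω, f (ω (k + 1)) ∂law l z + ∫⁻ ω, g (ω k) ∂law l z
      ≤ ∫⁻ ω, f (ω k) ∂law l z + ∫⁻ ω, h (ω k) ∂law l z := by
  induction k generalizing l z with
  | zero =>
    simp only [hlaw.lintegral_comp_eval_succ hf, hlaw.lintegral_comp_eval_zero hPbar, hf, hg, hh]
    exact hstep l z
  | succ k ih =>
    rw [hlaw.lintegral_comp_eval_succ hf (k + 1), hlaw.lintegral_comp_eval_succ hg,
      hlaw.lintegral_comp_eval_succ hf, hlaw.lintegral_comp_eval_succ hh,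
      ← lintegral_add_left (hlaw.measurable_lintegral_comp_eval hf _ _),
      ← lintegral_add_left (hlaw.measurable_lintegral_comp_eval hf _ _)]
    exact lintegral_mono fun z' => ih (l + 1) z'

theorem IsAdaptiveLaw.weighted_tail_le (hlaw : IsAdaptiveLaw Pbar law)
    (hPbar : ∀ n, IsMarkovKernel (Pbar n)) (hf : Measurable f) (hg : Measurable g)
    (hh : Measurable h) (hstep : ∀ l z, ∫⁻ z', f z' ∂Pbar l z + g z ≤ f z + h z)
    {ρ : ℕ → ℝ≥0∞} (hρ : Antitone ρ) (l : ℕ) (z : X × Θ) (n : ℕ) :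
    ∫⁻ ω, ∑' k, (if n ≤ k then ρ (k + 1) * g (ω k) else 0) ∂law l z
      ≤ ρ n * ∫⁻ ω, f (ω n) ∂law l z
        + ∫⁻ ω, ∑' k, (if n ≤ k then ρ (k + 1) * h (ω k) else 0) ∂law l z := by
  have hmeas {u : X × Θ → ℝ≥0∞} (hu : Measurable u) (k : ℕ) :
      Measurable fun ω : ℕ → X × Θ => u (ω k) :=
    hu.comp (measurable_pi_apply k)
  calc _ = ∑' k, if n ≤ k then ρ (k + 1) * ∫⁻ ω, g (ω k) ∂law l z else 0 :=
        lintegral_tsum_ite_mul (hmeas hg) _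
    _ ≤ ρ n * ∫⁻ ω, f (ω n) ∂law l z
          + ∑' k, if n ≤ k then ρ (k + 1) * ∫⁻ ω, h (ω k) ∂law l z else 0 :=
        weighted_tsum_le_of_drift hρ (fun k => hlaw.lintegral_drift_le hPbar hf hg hh hstep k l z) n
    _ = _ := by rw [lintegral_tsum_ite_mul (hmeas hh)]

end Chain

section Drift

variable {X Θ : Type*} [MeasurableSpace X] [MeasurableSpace Θ]
  {P : Θ → Kernel X X} {Pbar : ℕ → Kernel (X × Θ) (X × Θ)}

theorem Compat.lintegral_comp_fst (hcompat : Compat P Pbar) {u : X → ℝ≥0∞} (hu : Measurable u)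
    (n : ℕ) (x : X) (θ : Θ) :
    ∫⁻ z, u z.1 ∂Pbar n (x, θ) = ∫⁻ y, u y ∂P θ x := by
  have hmap : (Pbar n (x, θ)).map Prod.fst = P θ x := by
    ext A hA
    rw [Measure.map_apply measurable_fst hA, ← Set.prod_univ, hcompat n x θ A hA]
  rw [← hmap, lintegral_map hu measurable_fst]

theorem Compat.lintegral_rpow_add_le (hcompat : Compat P Pbar)
    (hP : ∀ θ, IsMarkovKernel (P θ)) {V : X → ℝ} (hV : Measurable V) (hV1 : ∀ x, 1 ≤ V x)
    {C : Set X} {α b c β : ℝ} (hb : 0 ≤ b) (hc : 0 ≤ c) (hβ0 : 0 ≤ β) (hβ1 : β ≤ 1)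
    (hdrift : ∀ θ x, ∫⁻ y, ENNReal.ofReal (V y) ∂P θ x
      ≤ ENNReal.ofReal (V x - c * V x ^ (1 - α) + b * C.indicator (fun _ => (1 : ℝ)) x))
    (n : ℕ) (z : X × Θ) :
    ∫⁻ z', ENNReal.ofReal (V z'.1 ^ β) ∂Pbar n z
        + ENNReal.ofReal (β * c) * ENNReal.ofReal (V z.1 ^ (β - α))
      ≤ ENNReal.ofReal (V z.1 ^ β) + ENNReal.ofReal b * C.indicator 1 z.1 := by
  obtain ⟨x, θ⟩ := z
  have hind : ENNReal.ofReal (b * C.indicator (fun _ => (1 : ℝ)) x)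
      = ENNReal.ofReal b * C.indicator 1 x := by
    by_cases hx : x ∈ C <;> simp [hx]
  rw [hcompat.lintegral_comp_fst (u := fun y => ENNReal.ofReal (V y ^ β))
    (hV.pow_const β).ennreal_ofReal, ← hind]
  exact lintegral_rpow_add_le_of_lintegral_le hV hV1 (hV1 x) hc
    (mul_nonneg hb (Set.indicator_nonneg (fun _ _ => zero_le_one) x)) hβ0 hβ1 (hdrift θ x)

end Drift

theorem weighted_tail_bound_general
    {X Θ : Type*} [MeasurableSpace X] [MeasurableSpace Θ]
    (P : Θ → Kernel X X) (hPm : ∀ θ, IsMarkovKernel (P θ))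
    (Pbar : ℕ → Kernel (X × Θ) (X × Θ)) (hPbarm : ∀ n, IsMarkovKernel (Pbar n))
    (hcompat : Compat P Pbar)
    (law : ℕ → X × Θ → Measure (ℕ → X × Θ)) (hlaw : IsAdaptiveLaw Pbar law)
    (V : X → ℝ) (hVmeas : Measurable V) (hV1 : ∀ x, 1 ≤ V x)
    (C : Set X) (hCmeas : MeasurableSet C)
    (α b c : ℝ) (hb : 0 < b) (hc : 0 < c)
    (hdrift : ∀ (θ : Θ) (x : X),
        (∫⁻ y, ENNReal.ofReal (V y) ∂(P θ x)) ≤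
          ENNReal.ofReal (V x - c * V x ^ (1 - α) + b * C.indicator (fun _ => (1 : ℝ)) x))
    (r : ℕ → ℝ) (hrdec : Antitone r) :
    ∃ bb : ℝ, ∀ (l : ℕ) (x : X) (θ : Θ) (β : ℝ), 0 ≤ β → β ≤ 1 → ∀ n : ℕ,
      ENNReal.ofReal (β * c) *
        (∫⁻ ω, ∑' k : ℕ, (if n ≤ k then
            ENNReal.ofReal (r (k + 1) * V ((ω k).1) ^ (β - α)) else 0) ∂(law l (x, θ))) ≤
      ENNReal.ofReal (r n) *
          (∫⁻ ω, ENNReal.ofReal (V ((ω n).1) ^ β) ∂(law l (x, θ))) +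
        ENNReal.ofReal bb *
          ∫⁻ ω, ∑' k : ℕ, (if n ≤ k ∧ (ω k).1 ∈ C then
            ENNReal.ofReal (r (k + 1)) else 0) ∂(law l (x, θ)) := by
  refine ⟨b, fun l x θ β hβ0 hβ1 n => ?_⟩
  have hmeas {p : ℝ} : Measurable fun z : X × Θ => ENNReal.ofReal (V z.1 ^ p) :=
    ((hVmeas.pow_const p).comp measurable_fst).ennreal_ofReal
  have htail := hlaw.weighted_tail_le hPbarm hmeas (hmeas.const_mul _)
    (((measurable_const.indicator hCmeas).comp measurable_fst).const_mul _)
    (hcompat.lintegral_rpow_add_le hPm hVmeas hV1 hb.le hc.le hβ0 hβ1 hdrift)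
    (fun _ _ hmn => ENNReal.ofReal_le_ofReal (hrdec hmn)) l (x, θ) n
  convert htail using 2
  · rw [← lintegral_const_mul' _ _ ENNReal.ofReal_ne_top]
    refine lintegral_congr fun ω => ?_
    rw [← ENNReal.tsum_mul_left]
    refine tsum_congr fun k => ?_
    split_ifs
    · rw [ENNReal.ofReal_mul' (Real.rpow_nonneg (zero_le_one.trans (hV1 _)) _)]; ring
    · exact mul_zero _
  · rw [← lintegral_const_mul' _ _ ENNReal.ofReal_ne_top]
    refine lintegral_congr fun ω => ?_
    rw [← ENNReal.tsum_mul_left]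
    refine tsum_congr fun k => ?_
    by_cases hk : n ≤ k <;> by_cases hC : (ω k).1 ∈ C <;> simp [hk, hC, mul_comm]

/-- Proposition 4.6: weighted tail moment bound under the drift condition. -/
theorem weighted_tail_bound
    {X Θ : Type*} [MeasurableSpace X] [MeasurableSpace Θ]
    (P : Θ → Kernel X X) (hPm : ∀ θ, IsMarkovKernel (P θ))
    (hPθmeas : ∀ (x : X) (A : Set X), MeasurableSet A → Measurable fun θ => P θ x A)
    (Pbar : ℕ → Kernel (X × Θ) (X × Θ)) (hPbarm : ∀ n, IsMarkovKernel (Pbar n))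
    (hcompat : Compat P Pbar)
    (law : ℕ → X × Θ → Measure (ℕ → X × Θ)) (hlaw : IsAdaptiveLaw Pbar law)
    (V : X → ℝ) (hVmeas : Measurable V) (hV1 : ∀ x, 1 ≤ V x)
    (C : Set X) (hCmeas : MeasurableSet C)
    (α b c : ℝ) (hα0 : 0 < α) (hα1 : α ≤ 1) (hb : 0 < b) (hc : 0 < c)
    (hdrift : ∀ (θ : Θ) (x : X),
        (∫⁻ y, ENNReal.ofReal (V y) ∂(P θ x)) ≤
          ENNReal.ofReal (V x - c * V x ^ (1 - α) + b * C.indicator (fun _ => (1 : ℝ)) x))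
    (r : ℕ → ℝ) (hrpos : ∀ n, 0 < r n) (hrdec : Antitone r) :
    ∃ bb : ℝ, ∀ (l : ℕ) (x : X) (θ : Θ) (β : ℝ), 0 ≤ β → β ≤ 1 → ∀ n : ℕ,
      ENNReal.ofReal (β * c) *
        (∫⁻ ω, ∑' k : ℕ, (if n ≤ k then
            ENNReal.ofReal (r (k + 1) * V ((ω k).1) ^ (β - α)) else 0) ∂(law l (x, θ))) ≤
      ENNReal.ofReal (r n) *
          (∫⁻ ω, ENNReal.ofReal (V ((ω n).1) ^ β) ∂(law l (x, θ))) +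
        ENNReal.ofReal bb *
          ∫⁻ ω, ∑' k : ℕ, (if n ≤ k ∧ (ω k).1 ∈ C then
            ENNReal.ofReal (r (k + 1)) else 0) ∂(law l (x, θ)) :=
  weighted_tail_bound_general P hPm Pbar hPbarm hcompat law hlaw V hVmeas hV1 C hCmeas α b c hb hc
    hdrift r hrdec

end AdaptiveMCMC
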